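/- arXiv:1609.07918 — 5 statements merged into one kernel-verified Lean document; each statement's English description precedes it below -/
import Mathlib

section
/- Let N : (0,∞) → ℝ be locally integrable, let T > 0, let n be a positive integer, and let z : [0,∞) → ℝ be locally absolutely continuous with z(0) = 1 and z'(t) = −n² ∫₀^t N(t−s) z(s) ds for almost every t. Assume N is of positive type on [0,T], i.e. ∫₀^t w(s) (∫₀^s N(s−r) w(r) dr) ds ≥ 0 for every continuous w : [0,T] → ℝ and every t ∈ [0,T]. Then |z(t)| ≤ 1 for every t ∈ [0,T]. -/
open MeasureTheory Set

/-!
Since `z = 1 + ∫₀ z'` is absolutely continuous, the chain rule for `z²` gives the energy identity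
`z(t)² - 1 = 2 ∫₀ᵗ z z'`. Substituting the equation, `z z' = -n² z (N ∗ z)` a.e., so the right-hand
side is `-2n²` times the positive-type quadratic form of `N` evaluated at `w = z`, hence `≤ 0`.
-/

theorem intervalIntegral_primitive_mul_self_eq {f : ℝ → ℝ} {a b : ℝ}
    (hf : IntervalIntegrable f volume a b) (c : ℝ) :
    ∫ x in a..b, (c + ∫ s in a..x, f s) * f x
      = ((c + ∫ s in a..b, f s) ^ 2 - c ^ 2) / 2 := by
  set F : ℝ → ℝ := fun x => c + ∫ s in a..x, f s
  have hF : AbsolutelyContinuousOnInterval F a b :=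
    ((LipschitzWith.const c).lipschitzOnWith.absolutelyContinuousOnInterval).fun_add
      (hf.absolutelyContinuousOnInterval_intervalIntegral left_mem_uIcc)
  have hderiv : ∀ᵐ x, x ∈ uIoc a b → deriv (F * F) x = 2 * (F x * f x) := by
    filter_upwards [hf.ae_hasDerivAt_integral] with x hx hxab
    have hFx : HasDerivAt F (f x) x := (hx (uIoc_subset_uIcc hxab) a left_mem_uIcc).const_add c
    rw [(hFx.mul hFx).deriv]
    ring
  have hFTC := (hF.mul hF).integral_deriv_eq_sub
  rw [intervalIntegral.integral_congr_ae hderiv, intervalIntegral.integral_const_mul] at hFTC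
  simp only [Pi.mul_apply, F, intervalIntegral.integral_same, add_zero] at hFTC
  linarith

theorem solution_bounded_of_positive_type_general (N z z' : ℝ → ℝ) (T : ℝ) (hT : 0 < T)
    (n : ℕ)
    (hz'loc : ∀ S : ℝ, 0 < S → IntegrableOn z' (Ioc 0 S))
    (hrep : ∀ t : ℝ, 0 ≤ t → z t = 1 + ∫ s in (0 : ℝ)..t, z' s)
    (heq : ∀ᵐ t ∂(volume.restrict (Ioi (0 : ℝ))),
      z' t = -(n : ℝ) ^ 2 * ∫ s in (0 : ℝ)..t, N (t - s) * z s)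
    (hpos : ∀ w : ℝ → ℝ, ContinuousOn w (Icc 0 T) → ∀ t ∈ Icc (0 : ℝ) T,
      0 ≤ ∫ s in (0 : ℝ)..t, w s * ∫ r in (0 : ℝ)..s, N (s - r) * w r) :
    ∀ t ∈ Icc (0 : ℝ) T, |z t| ≤ 1 := by
  have hz'T : IntervalIntegrable z' volume 0 T :=
    (intervalIntegrable_iff_integrableOn_Ioc_of_le hT.le).2 (hz'loc T hT)
  have hz_cont : ContinuousOn z (Icc 0 T) := by
    have hprim := (hz'T.absolutelyContinuousOnInterval_intervalIntegral left_mem_uIcc).continuousOn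
    rw [uIcc_of_le hT.le] at hprim
    exact (continuousOn_const.add hprim).congr fun s hs => hrep s hs.1
  intro t ht
  have hz't : IntervalIntegrable z' volume 0 t :=
    hz'T.mono_set (uIcc_subset_uIcc_left (by rwa [uIcc_of_le hT.le]))
  have henergy : z t ^ 2 - 1 = 2 * ∫ s in (0 : ℝ)..t, z s * z' s := by
    have hzs : EqOn (fun s => z s * z' s) (fun s => (1 + ∫ r in (0 : ℝ)..s, z' r) * z' s)
        (uIcc 0 t) := fun s hs =>
      congrArg (· * z' s) (hrep s (uIcc_of_le ht.1 ▸ hs).1)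
    rw [intervalIntegral.integral_congr hzs, intervalIntegral_primitive_mul_self_eq hz't,
      ← hrep t ht.1]
    ring
  have hsubst : ∫ s in (0 : ℝ)..t, z s * z' s
      = -(n : ℝ) ^ 2 * ∫ s in (0 : ℝ)..t, z s * ∫ r in (0 : ℝ)..s, N (s - r) * z r := by
    rw [← intervalIntegral.integral_const_mul]
    refine intervalIntegral.integral_congr_ae ?_
    filter_upwards [(ae_restrict_iff' measurableSet_Ioi).1 heq] with s hs hst
    rw [hs (uIoc_of_le ht.1 ▸ hst).1]
    ring
  have hquad := hpos z hz_cont t ht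
  rw [abs_le_one_iff_mul_self_le_one]
  nlinarith [sq_nonneg (n : ℝ)]

/-- If `N` is locally integrable on `(0,∞)` and of positive type on `[0,T]`,
and `z` is locally absolutely continuous with `z(0) = 1` and
`z'(t) = −n² ∫₀^t N(t−s) z(s) ds` a.e., then `|z(t)| ≤ 1` on `[0,T]`. -/
theorem solution_bounded_of_positive_type (N z z' : ℝ → ℝ) (T : ℝ) (hT : 0 < T)
    (n : ℕ) (hn : 0 < n)
    (hNloc : ∀ S : ℝ, 0 < S → IntegrableOn N (Ioc 0 S))
    (hz'loc : ∀ S : ℝ, 0 < S → IntegrableOn z' (Ioc 0 S))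
    (hz0 : z 0 = 1)
    (hrep : ∀ t : ℝ, 0 ≤ t → z t = 1 + ∫ s in (0 : ℝ)..t, z' s)
    (heq : ∀ᵐ t ∂(volume.restrict (Ioi (0 : ℝ))),
      z' t = -(n : ℝ) ^ 2 * ∫ s in (0 : ℝ)..t, N (t - s) * z s)
    (hpos : ∀ w : ℝ → ℝ, ContinuousOn w (Icc 0 T) → ∀ t ∈ Icc (0 : ℝ) T,
      0 ≤ ∫ s in (0 : ℝ)..t, w s * ∫ r in (0 : ℝ)..s, N (s - r) * w r) :
    ∀ t ∈ Icc (0 : ℝ) T, |z t| ≤ 1 :=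
  solution_bounded_of_positive_type_general N z z' T hT n hz'loc hrep heq hpos
end

section
/- Let α > 0, γ ∈ (0,1), σ > 0, β > 0, δ ∈ (0, π/2), and let N₁ : ℂ → ℂ be such that |N₁(β+iω)| < α·|β+iω|^σ for every ω ∈ ℝ. Define ζ(λ) = λ^(1+γ)/(α + N₁(λ)·λ^(−σ)) (principal branch powers) and R(ω) = |ζ(β+iω)|. Let n be a positive integer with n² > (2α)^(1/γ)/cos δ, and let ω ≥ n² cos δ. Then: (ii) R(ω) > n² cos δ; and (iii) (R(ω) − n² cos δ)² ≥ ((1/(2α))·ω^(1+γ) − n² cos δ)², where moreover (1/(2α))·ω^(1+γ) − n² cos δ > 0. -/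
open Complex

/-!
Write `λ = β + iω`. The hypothesis on `N₁` says exactly that the perturbation
`N₁(λ) λ^(−σ)` of the denominator has modulus less than `α`, so the denominator has modulus
in `(0, 2α)` and `R(ω) > |λ|^(1+γ)/(2α) ≥ ω^(1+γ)/(2α)`. On the other hand
`c := n² cos δ > (2α)^(1/γ)` means `c^γ > 2α`, so `ω ≥ c` gives
`ω^(1+γ)/(2α) ≥ c · c^γ/(2α) > c`. Both estimates follow from `c < ω^(1+γ)/(2α) < R(ω)`.
-/

lemma norm_add_mem_Ioo_of_norm_lt {E : Type*} [SeminormedAddCommGroup E] {x r : E}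
    (h : ‖r‖ < ‖x‖) : ‖x + r‖ ∈ Set.Ioo 0 (2 * ‖x‖) := by
  have hlow : ‖x‖ - ‖r‖ ≤ ‖x + r‖ := by
    simpa using norm_sub_norm_le x (-r)
  constructor
  · linarith
  · linarith [norm_add_le x r]

lemma norm_mul_cpow_neg_lt {z w : ℂ} {a σ : ℝ} (hz : z ≠ 0) (h : ‖w‖ < a * ‖z‖ ^ σ) :
    ‖w * z ^ (-(σ : ℂ))‖ < a := by
  have hz' : 0 < ‖z‖ := norm_pos_iff.mpr hz
  rw [norm_mul, ← ofReal_neg, norm_cpow_real]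
  calc ‖w‖ * ‖z‖ ^ (-σ) < a * ‖z‖ ^ σ * ‖z‖ ^ (-σ) := by gcongr
    _ = a := by rw [mul_assoc, ← Real.rpow_add hz', add_neg_cancel, Real.rpow_zero, mul_one]

lemma rpow_div_lt_norm_cpow_div {z d : ℂ} {ω p b : ℝ} (hω : 0 < ω) (hωz : ω ≤ ‖z‖)
    (hp : 0 ≤ p) (hd : ‖d‖ ∈ Set.Ioo 0 b) : ω ^ p / b < ‖z ^ (p : ℂ) / d‖ := by
  have hz : 0 < ‖z‖ := hω.trans_le hωz
  rw [norm_div, norm_cpow_real]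
  calc ω ^ p / b ≤ ‖z‖ ^ p / b := by
        gcongr
        exact (hd.1.trans hd.2).le
    _ < ‖z‖ ^ p / ‖d‖ := div_lt_div_of_pos_left (by positivity) hd.1 hd.2

lemma lt_rpow_one_add_div {a γ c ω : ℝ} (ha : 0 < a) (hγ : 0 < γ) (hc : a ^ (1 / γ) < c)
    (hcω : c ≤ ω) : c < ω ^ (1 + γ) / a := by
  have hc0 : 0 < c := (by positivity : 0 < a ^ (1 / γ)).trans hc
  have hcγ : a < c ^ γ := by
    rwa [one_div, Real.rpow_inv_lt_iff_of_pos ha.le hc0.le hγ] at hc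
  rw [lt_div_iff₀ ha]
  calc c * a < c * c ^ γ := by gcongr
    _ = c ^ (1 + γ) := (Real.rpow_one_add' hc0.le (by linarith)).symm
    _ ≤ ω ^ (1 + γ) := by gcongr

lemma rpow_div_two_mul_lt_norm_cpow_div {α γ σ β ω : ℝ} {N₁ : ℂ → ℂ} (hα : 0 < α)
    (hγ : 0 ≤ 1 + γ) (hω : 0 < ω)
    (hN₁ : ‖N₁ ((β : ℂ) + ω * I)‖ < α * ‖(β : ℂ) + ω * I‖ ^ σ) :
    ω ^ (1 + γ) / (2 * α)
      < ‖((β : ℂ) + ω * I) ^ ((1 : ℂ) + (γ : ℂ))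
          / ((α : ℂ) + N₁ ((β : ℂ) + ω * I) * ((β : ℂ) + ω * I) ^ (-(σ : ℂ)))‖ := by
  set z : ℂ := (β : ℂ) + ω * I
  have hωz : ω ≤ ‖z‖ := by
    simpa [z, abs_of_pos hω] using abs_im_le_norm z
  have hz : z ≠ 0 := norm_pos_iff.mp (hω.trans_le hωz)
  have hα' : ‖(α : ℂ)‖ = α := by rw [norm_real, Real.norm_of_nonneg hα.le]
  have hd := norm_add_mem_Ioo_of_norm_lt (x := (α : ℂ)) (hα' ▸ norm_mul_cpow_neg_lt hz hN₁)
  rw [hα'] at hd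
  exact_mod_cast rpow_div_lt_norm_cpow_div hω hωz hγ hd

theorem modulus_estimates_general (α γ σ β δ : ℝ) (N₁ : ℂ → ℂ)
    (hα : 0 < α) (hγ : γ ∈ Set.Ioo (0 : ℝ) 1)
    (hδ : δ ∈ Set.Ioo 0 (Real.pi / 2))
    (hN₁ : ∀ ω : ℝ, ‖N₁ ((β : ℂ) + ω * Complex.I)‖
      < α * ‖(β : ℂ) + ω * Complex.I‖ ^ σ)
    (n : ℕ) (hn : (2 * α) ^ (1 / γ) / Real.cos δ < (n : ℝ) ^ 2)
    (ω : ℝ) (hω : (n : ℝ) ^ 2 * Real.cos δ ≤ ω) :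
    (n : ℝ) ^ 2 * Real.cos δ
        < ‖(((β : ℂ) + ω * Complex.I) ^ ((1 : ℂ) + (γ : ℂ))
            / ((α : ℂ) + N₁ ((β : ℂ) + ω * Complex.I)
                * ((β : ℂ) + ω * Complex.I) ^ (-(σ : ℂ))))‖ ∧
      (1 / (2 * α) * ω ^ (1 + γ) - (n : ℝ) ^ 2 * Real.cos δ) ^ 2
        ≤ (‖(((β : ℂ) + ω * Complex.I) ^ ((1 : ℂ) + (γ : ℂ))
            / ((α : ℂ) + N₁ ((β : ℂ) + ω * Complex.I)
                * ((β : ℂ) + ω * Complex.I) ^ (-(σ : ℂ))))‖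
          - (n : ℝ) ^ 2 * Real.cos δ) ^ 2 ∧
      0 < 1 / (2 * α) * ω ^ (1 + γ) - (n : ℝ) ^ 2 * Real.cos δ := by
  have hcos : 0 < Real.cos δ :=
    Real.cos_pos_of_mem_Ioo ⟨by linarith [hδ.1, Real.pi_pos], hδ.2⟩
  have hc : (2 * α) ^ (1 / γ) < (n : ℝ) ^ 2 * Real.cos δ := (div_lt_iff₀ hcos).mp hn
  have hcω := lt_rpow_one_add_div (by positivity) hγ.1 hc hω
  have hωR := rpow_div_two_mul_lt_norm_cpow_div (γ := γ) hα (by linarith [hγ.1])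
    ((by positivity : (0 : ℝ) < (2 * α) ^ (1 / γ)).trans (hc.trans_le hω)) (hN₁ ω)
  rw [one_div_mul_eq_div]
  exact ⟨hcω.trans hωR, pow_le_pow_left₀ (by linarith) (by linarith) 2, by linarith⟩

/-- Lemma on the modulus `R(ω) = |ζ(β+iω)|` of
`ζ(λ) = λ^(1+γ)/(α + N₁(λ) λ^(−σ))`: if `|N₁(β+iω)| < α |β+iω|^σ`,
`n² > (2α)^(1/γ)/cos δ` and `ω ≥ n² cos δ`, then `R(ω) > n² cos δ` and
`(R(ω) − n² cos δ)² ≥ ((1/(2α)) ω^(1+γ) − n² cos δ)²`, with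
`(1/(2α)) ω^(1+γ) − n² cos δ > 0`. -/
theorem modulus_estimates (α γ σ β δ : ℝ) (N₁ : ℂ → ℂ)
    (hα : 0 < α) (hγ : γ ∈ Set.Ioo (0 : ℝ) 1) (hσ : 0 < σ) (hβ : 0 < β)
    (hδ : δ ∈ Set.Ioo 0 (Real.pi / 2))
    (hN₁ : ∀ ω : ℝ, ‖N₁ ((β : ℂ) + ω * Complex.I)‖
      < α * ‖(β : ℂ) + ω * Complex.I‖ ^ σ)
    (n : ℕ) (hn1 : 0 < n) (hn : (2 * α) ^ (1 / γ) / Real.cos δ < (n : ℝ) ^ 2)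
    (ω : ℝ) (hω : (n : ℝ) ^ 2 * Real.cos δ ≤ ω) :
    (n : ℝ) ^ 2 * Real.cos δ
        < ‖(((β : ℂ) + ω * Complex.I) ^ ((1 : ℂ) + (γ : ℂ))
            / ((α : ℂ) + N₁ ((β : ℂ) + ω * Complex.I)
                * ((β : ℂ) + ω * Complex.I) ^ (-(σ : ℂ))))‖ ∧
      (1 / (2 * α) * ω ^ (1 + γ) - (n : ℝ) ^ 2 * Real.cos δ) ^ 2
        ≤ (‖(((β : ℂ) + ω * Complex.I) ^ ((1 : ℂ) + (γ : ℂ))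
            / ((α : ℂ) + N₁ ((β : ℂ) + ω * Complex.I)
                * ((β : ℂ) + ω * Complex.I) ^ (-(σ : ℂ))))‖
          - (n : ℝ) ^ 2 * Real.cos δ) ^ 2 ∧
      0 < 1 / (2 * α) * ω ^ (1 + γ) - (n : ℝ) ^ 2 * Real.cos δ :=
  modulus_estimates_general α γ σ β δ N₁ hα hγ hδ hN₁ n hn ω hω
end

section
/- Let α > 0, γ ∈ (0,1), δ ∈ (0, π/2), and let n be a positive integer with n² > (2α)^(1+γ)/cos δ. Then ∫_{n² cos δ}^{∞} dω / ( ((1/(2α))·ω^(1+γ) − n² cos δ)² + n⁴ sin²δ ) ≤ π·(2α)^(1/(1+γ)) / ((1+γ)·n²·sin δ). -/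
/-!
Substituting `ω = (2αn² t)^q` with `q = 1/(1+γ) ∈ (1/2, 1)` and enlarging the range to `ω > 0`
bounds the integral by `q (2αn²)^q n⁻⁴ J`, `J = ∫₀^∞ t^(q-1) dt / ((t - cos δ)² + sin² δ)`.
As `cos² δ + sin² δ = 1`, the inversion `t ↦ 1/t` turns `t^s` into `t^(-s)` in `J`, so `J` is half
of `∫ (t^(q-1) + t^(1-q)) / …`, and `t^s + t^(-s) = 2 cosh (s log t)` is at most its value at
`s = 1/2`. Under `t = u²` that integrand splits into the two Lorentzians
`1 / ((u ∓ cos (δ/2))² + sin² (δ/2))`, whose integrals over `u > 0` add up to `π / sin (δ/2)`.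
It remains to use `n^(2q) ≤ n²` and `sin δ ≤ 2 sin (δ/2)`.
-/

open MeasureTheory Set Real Filter Topology

theorem rpow_add_rpow_neg_le_of_abs_le {t a b : ℝ} (ht : 0 < t) (hab : |a| ≤ |b|) :
    t ^ a + t ^ (-a) ≤ t ^ b + t ^ (-b) := by
  have hcosh (x : ℝ) : t ^ x + t ^ (-x) = 2 * cosh (log t * x) := by
    rw [cosh_eq, rpow_def_of_pos ht, rpow_def_of_pos ht, mul_neg]; ring
  rw [hcosh, hcosh, mul_le_mul_iff_right₀ two_pos, cosh_le_cosh, abs_mul, abs_mul]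
  exact mul_le_mul_of_nonneg_left hab (abs_nonneg _)

theorem integrableOn_rpow_mul_inv_sq_add_sq (c : ℝ) {w s : ℝ} (hw : w ≠ 0) (hs₀ : -1 < s)
    (hs₁ : s < 1) : IntegrableOn (fun t ↦ t ^ s * ((t - c) ^ 2 + w ^ 2)⁻¹) (Ioi 0) := by
  have hR : (0 : ℝ) < 2 * |c| + 1 := by positivity
  have hmeas : AEStronglyMeasurable (fun t : ℝ ↦ t ^ s * ((t - c) ^ 2 + w ^ 2)⁻¹) := by
    fun_prop
  rw [← Ioc_union_Ioi_eq_Ioi hR.le]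
  refine IntegrableOn.union ?_ ?_
  · have hdom : IntegrableOn (fun t : ℝ ↦ t ^ s * (w ^ 2)⁻¹) (Ioc 0 (2 * |c| + 1)) :=
      ((intervalIntegrable_iff_integrableOn_Ioc_of_le hR.le).mp
        (intervalIntegral.intervalIntegrable_rpow' hs₀)).mul_const _
    refine hdom.mono' hmeas.restrict <| (ae_restrict_iff' measurableSet_Ioc).mpr <|
      ae_of_all _ fun t ht ↦ ?_
    have ht₀ : 0 < t := ht.1
    rw [norm_of_nonneg (by positivity)]
    gcongr
    exact le_add_of_nonneg_left (sq_nonneg _)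
  · have hdom : IntegrableOn (fun t : ℝ ↦ 4 * t ^ (s - 2)) (Ioi (2 * |c| + 1)) :=
      (integrableOn_Ioi_rpow_of_lt (by linarith) hR).const_mul 4
    refine hdom.mono' hmeas.restrict <| (ae_restrict_iff' measurableSet_Ioi).mpr <|
      ae_of_all _ fun t (ht : _ < t) ↦ ?_
    have ht₀ : 0 < t := hR.trans ht
    have hhalf : t / 2 ≤ t - c := by linarith [le_abs_self c]
    rw [norm_of_nonneg (by positivity), rpow_sub ht₀, rpow_two]
    calc t ^ s * ((t - c) ^ 2 + w ^ 2)⁻¹ ≤ t ^ s * ((t / 2) ^ 2)⁻¹ := by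
          gcongr
          exact le_add_of_le_of_nonneg (pow_le_pow_left₀ (by positivity) hhalf 2) (sq_nonneg _)
      _ = 4 * (t ^ s / t ^ 2) := by field_simp; ring

theorem integral_Ioi_inv_sq_add_sq (A : ℝ) {B : ℝ} (hB : 0 < B) :
    ∫ u in Ioi 0, ((u - A) ^ 2 + B ^ 2)⁻¹ = (π / 2 + arctan (A / B)) / B := by
  have hderiv (u : ℝ) (_ : u ∈ Ici 0) :
      HasDerivAt (fun u ↦ arctan ((u - A) / B) / B) ((u - A) ^ 2 + B ^ 2)⁻¹ u := by
    have h := ((((hasDerivAt_id' u).sub_const A).div_const B).arctan).div_const B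
    refine h.congr_deriv ?_
    field_simp
    ring
  have hint : IntegrableOn (fun u ↦ ((u - A) ^ 2 + B ^ 2)⁻¹) (Ioi 0) := by
    simpa using integrableOn_rpow_mul_inv_sq_add_sq A hB.ne' (s := 0) (by norm_num) one_pos
  have hlim : Tendsto (fun u ↦ arctan ((u - A) / B) / B) atTop (𝓝 (π / 2 / B)) :=
    ((tendsto_arctan_atTop.mono_right nhdsWithin_le_nhds).comp
      ((tendsto_atTop_add_const_right _ (-A) tendsto_id).atTop_div_const hB)).div_const B
  rw [integral_Ioi_of_hasDerivAt_of_tendsto' hderiv hint hlim, zero_sub, neg_div, arctan_neg]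
  ring

theorem integral_Ioi_rpow_neg_mul_inv_sq_add_sq {c w : ℝ} (hcw : c ^ 2 + w ^ 2 = 1) (s : ℝ) :
    ∫ t in Ioi 0, t ^ (-s) * ((t - c) ^ 2 + w ^ 2)⁻¹
      = ∫ t in Ioi 0, t ^ s * ((t - c) ^ 2 + w ^ 2)⁻¹ := by
  rw [← integral_comp_rpow_Ioi (fun t ↦ t ^ s * ((t - c) ^ 2 + w ^ 2)⁻¹) (p := -1)
    (by norm_num)]
  refine setIntegral_congr_fun measurableSet_Ioi fun x (hx : 0 < x) ↦ ?_
  have hQ : (x⁻¹ - c) ^ 2 + w ^ 2 = ((x - c) ^ 2 + w ^ 2) / x ^ 2 := by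
    field_simp
    linear_combination (x ^ 2 - 1) * hcw
  simp only [smul_eq_mul, rpow_neg_one, inv_rpow hx.le, ← rpow_neg hx.le, hQ]
  rw [show (-1 : ℝ) - 1 = -2 by norm_num, rpow_neg hx.le 2, rpow_two, abs_neg, abs_one]
  field_simp

theorem integral_Ioi_sqrt_add_inv_sqrt_mul {δ : ℝ} (hsin : 0 < sin (δ / 2)) :
    ∫ t in Ioi 0, (t ^ (1 / 2 : ℝ) + t ^ (-(1 / 2) : ℝ)) * ((t - cos δ) ^ 2 + sin δ ^ 2)⁻¹
      = π / sin (δ / 2) := by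
  set A := cos (δ / 2)
  set B := sin (δ / 2)
  have hcos : cos δ = A ^ 2 - B ^ 2 := by rw [← cos_two_mul', mul_div_cancel₀ _ two_ne_zero]
  have hsin' : sin δ = 2 * A * B := by
    rw [mul_right_comm, ← sin_two_mul, mul_div_cancel₀ _ two_ne_zero]
  have hAB : A ^ 2 + B ^ 2 = 1 := cos_sq_add_sin_sq _
  have hint (A : ℝ) : IntegrableOn (fun u ↦ ((u - A) ^ 2 + B ^ 2)⁻¹) (Ioi 0) := by
    simpa using integrableOn_rpow_mul_inv_sq_add_sq A hsin.ne' (s := 0) (by norm_num) one_pos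
  rw [← integral_comp_rpow_Ioi _ two_ne_zero]
  calc _ = ∫ u in Ioi 0, (((u - A) ^ 2 + B ^ 2)⁻¹ + ((u - -A) ^ 2 + B ^ 2)⁻¹) := by
        refine setIntegral_congr_fun measurableSet_Ioi fun u (hu : 0 < u) ↦ ?_
        have hsqrt : (u ^ (2 : ℝ)) ^ (1 / 2 : ℝ) = u := by
          rw [← rpow_mul hu.le]; norm_num
        have hinv : (u ^ (2 : ℝ)) ^ (-(1 / 2) : ℝ) = u⁻¹ := by
          rw [← rpow_mul hu.le]; norm_num [rpow_neg_one]
        have hfac : (u ^ 2 - (A ^ 2 - B ^ 2)) ^ 2 + (2 * A * B) ^ 2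
            = ((u - A) ^ 2 + B ^ 2) * ((u - -A) ^ 2 + B ^ 2) := by ring
        rw [smul_eq_mul, hsqrt, hinv, abs_two, rpow_two, show (2 : ℝ) - 1 = 1 by norm_num,
          rpow_one, hcos, hsin', hfac]
        field_simp
        linear_combination (-2) * hAB
    _ = π / B := by
        rw [integral_add (hint A) (hint (-A)), integral_Ioi_inv_sq_add_sq A hsin,
          integral_Ioi_inv_sq_add_sq (-A) hsin, neg_div, arctan_neg]
        ring

theorem integral_Ioi_rpow_mul_inv_sq_add_sq_le {δ s : ℝ} (hδ : δ ∈ Ioo 0 π)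
    (hs : |s| ≤ 1 / 2) :
    ∫ t in Ioi 0, t ^ s * ((t - cos δ) ^ 2 + sin δ ^ 2)⁻¹ ≤ π / (2 * sin (δ / 2)) := by
  have hsin_half : 0 < sin (δ / 2) :=
    sin_pos_of_pos_of_lt_pi (by linarith [hδ.1]) (by linarith [hδ.2, pi_pos])
  have hint {r : ℝ} (hr : |r| < 1) :
      IntegrableOn (fun t ↦ t ^ r * ((t - cos δ) ^ 2 + sin δ ^ 2)⁻¹) (Ioi 0) :=
    integrableOn_rpow_mul_inv_sq_add_sq _ (sin_pos_of_pos_of_lt_pi hδ.1 hδ.2).ne'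
      (neg_lt_of_abs_lt hr) (lt_of_abs_lt hr)
  have hsymm : 2 * ∫ t in Ioi 0, t ^ s * ((t - cos δ) ^ 2 + sin δ ^ 2)⁻¹
      = ∫ t in Ioi 0, (t ^ s + t ^ (-s)) * ((t - cos δ) ^ 2 + sin δ ^ 2)⁻¹ := by
    simp only [add_mul]
    rw [integral_add (hint (by linarith)) (hint (by rw [abs_neg]; linarith)),
      integral_Ioi_rpow_neg_mul_inv_sq_add_sq (cos_sq_add_sin_sq δ)]
    ring
  have hmono : ∫ t in Ioi 0, (t ^ s + t ^ (-s)) * ((t - cos δ) ^ 2 + sin δ ^ 2)⁻¹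
      ≤ ∫ t in Ioi 0,
          (t ^ (1 / 2 : ℝ) + t ^ (-(1 / 2) : ℝ)) * ((t - cos δ) ^ 2 + sin δ ^ 2)⁻¹ := by
    refine setIntegral_mono_on ?_ ?_ measurableSet_Ioi fun t (ht : 0 < t) ↦ ?_
    · simp only [add_mul]
      exact (hint (by linarith)).add (hint (by rw [abs_neg]; linarith))
    · simp only [add_mul]
      exact (hint (by norm_num)).add (hint (by norm_num))
    · exact mul_le_mul_of_nonneg_right
        (rpow_add_rpow_neg_le_of_abs_le ht (hs.trans (le_abs_self _))) (by positivity)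
  rw [le_div_iff₀ (by positivity)]
  rw [← hsymm, integral_Ioi_sqrt_add_inv_sqrt_mul hsin_half, le_div_iff₀ hsin_half] at hmono
  linarith

theorem integral_Ioi_comp_rpow_div (f : ℝ → ℝ) {p a b : ℝ} (hp : 0 < p) (ha : 0 < a)
    (hb : 0 ≤ b) :
    ∫ ω in Ioi b, f (ω ^ p / a)
      = a ^ (1 / p) / p * ∫ t in Ioi (b ^ p / a), t ^ (1 / p - 1) * f t := by
  have hq : 0 < 1 / p := by positivity
  have hsub := integral_comp_rpow_Ioi_of_pos' (g := fun ω ↦ f (ω ^ p / a)) hq hb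
  rw [one_div, inv_inv, ← one_div] at hsub
  have hscale := integral_comp_mul_left_Ioi'
    (fun x ↦ (1 / p * x ^ (1 / p - 1)) • f ((x ^ (1 / p)) ^ p / a)) (b ^ p / a) ha
  rw [mul_div_cancel₀ _ ha.ne'] at hscale
  rw [← hsub, ← hscale, smul_eq_mul, ← integral_const_mul, ← integral_const_mul]
  refine setIntegral_congr_fun measurableSet_Ioi fun t (ht : _ < t) ↦ ?_
  have ht₀ : 0 < t := (div_nonneg (rpow_nonneg hb p) ha.le).trans_lt ht
  have hroot : ((a * t) ^ (1 / p)) ^ p = a * t := by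
    rw [← rpow_mul (by positivity), one_div_mul_cancel hp.ne', rpow_one]
  rw [smul_eq_mul, hroot, mul_div_cancel_left₀ t ha.ne', mul_rpow ha.le ht₀.le,
    rpow_sub_one ha.ne']
  field_simp

theorem integral_Ioi_inv_sq_add_sq_comp_rpow_div_le {p a b δ : ℝ} (hp₀ : 2 / 3 ≤ p)
    (hp₁ : p ≤ 2) (ha : 0 < a) (hb : 0 ≤ b) (hδ : δ ∈ Ioo 0 π) :
    ∫ ω in Ioi b, ((ω ^ p / a - cos δ) ^ 2 + sin δ ^ 2)⁻¹
      ≤ a ^ (1 / p) / p * (π / (2 * sin (δ / 2))) := by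
  have hp : 0 < p := by linarith
  have hexp : |1 / p - 1| ≤ 1 / 2 := by
    have : 1 / 2 ≤ 1 / p := one_div_le_one_div_of_le hp hp₁
    have : 1 / p ≤ 3 / 2 := (div_le_iff₀ hp).mpr (by linarith)
    rw [abs_le]; constructor <;> linarith
  rw [integral_Ioi_comp_rpow_div (fun t ↦ ((t - cos δ) ^ 2 + sin δ ^ 2)⁻¹) hp ha hb]
  gcongr
  refine (setIntegral_mono_set ?_ ?_ ?_).trans
    (integral_Ioi_rpow_mul_inv_sq_add_sq_le hδ hexp)
  · exact integrableOn_rpow_mul_inv_sq_add_sq _ (sin_pos_of_pos_of_lt_pi hδ.1 hδ.2).ne'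
      (by linarith [abs_le.mp hexp]) (by linarith [abs_le.mp hexp])
  · exact (ae_restrict_iff' measurableSet_Ioi).mpr <|
      ae_of_all _ fun t (ht : 0 < t) ↦ by positivity
  · exact (Ioi_subset_Ioi (by positivity)).eventuallyLE

theorem sin_le_two_mul_sin_half {x : ℝ} (hx : 0 ≤ sin (x / 2)) : sin x ≤ 2 * sin (x / 2) :=
  calc sin x = 2 * sin (x / 2) * cos (x / 2) := by
        rw [← sin_two_mul, mul_div_cancel₀ _ two_ne_zero]
    _ ≤ 2 * sin (x / 2) := mul_le_of_le_one_right (by positivity) (cos_le_one _)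

theorem tail_integral_estimate_general (α γ δ : ℝ) (hα : 0 < α)
    (hγ : γ ∈ Set.Ioo (0 : ℝ) 1) (hδ : δ ∈ Set.Ioo 0 (Real.pi / 2))
    (n : ℕ) (hn1 : 0 < n) :
    (∫ ω in Ioi ((n : ℝ) ^ 2 * Real.cos δ),
        1 / ((1 / (2 * α) * ω ^ (1 + γ) - (n : ℝ) ^ 2 * Real.cos δ) ^ 2
              + (n : ℝ) ^ 4 * Real.sin δ ^ 2))
      ≤ Real.pi * (2 * α) ^ (1 / (1 + γ)) / ((1 + γ) * (n : ℝ) ^ 2 * Real.sin δ) := by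
  obtain ⟨hγ₀, hγ₁⟩ := hγ
  obtain ⟨hδ₀, hδ₁⟩ := hδ
  set p := 1 + γ
  set N : ℝ := (n : ℝ) ^ 2
  have hp : 0 < p := by positivity
  have hN : 1 ≤ N := one_le_pow₀ (by exact_mod_cast hn1)
  have hsin_half : 0 < sin (δ / 2) := sin_pos_of_pos_of_lt_pi (by linarith) (by linarith)
  have hintegrand (ω : ℝ) :
      1 / ((1 / (2 * α) * ω ^ p - N * cos δ) ^ 2 + (n : ℝ) ^ 4 * sin δ ^ 2)
        = (N ^ 2)⁻¹ * ((ω ^ p / (2 * α * N) - cos δ) ^ 2 + sin δ ^ 2)⁻¹ := by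
    field_simp
    ring
  simp_rw [hintegrand]
  rw [integral_const_mul]
  calc _ ≤ (N ^ 2)⁻¹ * ((2 * α * N) ^ (1 / p) / p * (π / (2 * sin (δ / 2)))) := by
        gcongr
        have hcos : 0 ≤ cos δ := cos_nonneg_of_mem_Icc ⟨by linarith, hδ₁.le⟩
        exact integral_Ioi_inv_sq_add_sq_comp_rpow_div_le (by linarith) (by linarith)
          (by positivity) (by positivity) ⟨hδ₀, by linarith [pi_pos]⟩
    _ ≤ (N ^ 2)⁻¹ * ((2 * α) ^ (1 / p) * N / p * (π / sin δ)) := by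
        have hsin : 0 < sin δ := sin_pos_of_pos_of_lt_pi hδ₀ (by linarith [pi_pos])
        rw [mul_rpow (by positivity) (by positivity)]
        gcongr
        · exact rpow_le_self_of_one_le hN ((div_le_one hp).mpr (by linarith))
        · exact sin_le_two_mul_sin_half hsin_half.le
    _ = _ := by field_simp

/-- Estimate for the tail integral: if `n² > (2α)^(1+γ)/cos δ` then
`∫_{n² cos δ}^∞ dω/(((1/(2α)) ω^(1+γ) − n² cos δ)² + n⁴ sin²δ)
  ≤ π (2α)^(1/(1+γ))/((1+γ) n² sin δ)`. -/
theorem tail_integral_estimate (α γ δ : ℝ) (hα : 0 < α)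
    (hγ : γ ∈ Set.Ioo (0 : ℝ) 1) (hδ : δ ∈ Set.Ioo 0 (Real.pi / 2))
    (n : ℕ) (hn1 : 0 < n)
    (hn : (2 * α) ^ (1 + γ) / Real.cos δ < (n : ℝ) ^ 2) :
    (∫ ω in Ioi ((n : ℝ) ^ 2 * Real.cos δ),
        1 / ((1 / (2 * α) * ω ^ (1 + γ) - (n : ℝ) ^ 2 * Real.cos δ) ^ 2
              + (n : ℝ) ^ 4 * Real.sin δ ^ 2))
      ≤ Real.pi * (2 * α) ^ (1 / (1 + γ)) / ((1 + γ) * (n : ℝ) ^ 2 * Real.sin δ) :=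
  tail_integral_estimate_general α γ δ hα hγ hδ n hn1
end

section
/- Let α > 0, γ ∈ (0,1), σ > 0, and let N₁ be holomorphic and bounded on the open right half-plane Π₀ = {λ ∈ ℂ : Re λ > 0}. Let δ ∈ (0, (1−γ)π/2). Then there exists β₀ > 0 such that for every β ≥ β₀ and every ω ∈ ℝ: (1) |N₁(β+iω)| < α·|β+iω|^σ, and (2) the complex number ζ(β+iω) = (β+iω)^(1+γ)/(α + N₁(β+iω)·(β+iω)^(−σ)) satisfies Re ζ(β+iω) ≥ −|ζ(β+iω)| cos δ (equivalently, |Arg ζ(β+iω)| ≤ π − δ). -/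
/-!
Write `l = β + iω` and `ζ = l^(1+γ) / (α + w)` with `w = N₁(l) l^(-σ)`.
Since `|arg l| < π/2`, the numerator satisfies `Re l^(1+γ) ≥ cos((1+γ)π/2) |l^(1+γ)|`,
and `cos((1+γ)π/2) > -cos δ` because `δ < (1-γ)π/2`. As `N₁` is bounded, `|w| = O(β^(-σ))`,
so for large `β` the denominator is a small perturbation of `α` that rotates the numerator
by too little to spoil the bound `Re ζ ≥ -|ζ| cos δ`.
-/

open Complex ComplexConjugate Filter

lemma cos_mul_pi_div_two_mul_norm_le_re_cpow {z : ℂ} (hz : 0 < z.re) {p : ℝ}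
    (hp₀ : 0 ≤ p) (hp₂ : p ≤ 2) : Real.cos (p * Real.pi / 2) * ‖z ^ (p : ℂ)‖ ≤ (z ^ (p : ℂ)).re := by
  rw [cpow_ofReal_re, norm_cpow_real, mul_comm]
  refine mul_le_mul_of_nonneg_left ?_ (by positivity)
  have harg : |z.arg| < Real.pi / 2 := abs_arg_lt_pi_div_two_iff.2 (Or.inl hz)
  rw [← Real.cos_abs (z.arg * p)]
  refine Real.cos_le_cos_of_nonneg_of_le_pi (abs_nonneg _) (by nlinarith [Real.pi_pos]) ?_
  rw [abs_mul, abs_of_nonneg hp₀]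
  nlinarith

lemma neg_cos_lt_cos_one_add_mul_pi_div_two {γ δ : ℝ} (hδ₀ : 0 ≤ δ) (hγ : -1 ≤ γ)
    (hδ : δ < (1 - γ) * Real.pi / 2) : -Real.cos δ < Real.cos ((1 + γ) * Real.pi / 2) := by
  rw [show (1 + γ) * Real.pi / 2 = Real.pi - (1 - γ) * Real.pi / 2 by ring, Real.cos_pi_sub,
    neg_lt_neg_iff]
  exact Real.cos_lt_cos_of_nonneg_of_le_pi hδ₀ (by nlinarith [Real.pi_pos]) hδ

lemma neg_mul_norm_le_re_mul_conj_add {u w : ℂ} {α a c : ℝ} (hα : 0 ≤ α) (hc : 0 ≤ c)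
    (hu : a * ‖u‖ ≤ u.re) (hw : ‖w‖ * (1 + c) ≤ α * (c + a)) :
    -(c * ‖u‖ * ‖(α : ℂ) + w‖) ≤ (u * conj ((α : ℂ) + w)).re := by
  have hre : (u * conj ((α : ℂ) + w)).re = α * u.re + (u * conj w).re := by
    simp only [map_add, conj_ofReal, mul_add, add_re, mul_re, ofReal_re, ofReal_im]
    ring
  have huw : -(‖u‖ * ‖w‖) ≤ (u * conj w).re := by
    simpa using neg_le_of_abs_le (abs_re_le_norm (u * conj w))
  have hD : α - ‖w‖ ≤ ‖(α : ℂ) + w‖ := by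
    simpa [abs_of_nonneg hα] using norm_sub_le_norm_add (α : ℂ) w
  have hu₀ := norm_nonneg u
  rw [hre]
  nlinarith [mul_le_mul_of_nonneg_left hD (mul_nonneg hc hu₀), mul_le_mul_of_nonneg_left hu hα,
    mul_le_mul_of_nonneg_left hw hu₀]

lemma neg_norm_mul_le_re_div {u D : ℂ} {c : ℝ} (h : -(c * ‖u‖ * ‖D‖) ≤ (u * conj D).re) :
    -(‖u / D‖ * c) ≤ (u / D).re := by
  rcases eq_or_ne D 0 with rfl | hD
  · simp
  have hD' : 0 < ‖D‖ := norm_pos_iff.2 hD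
  have hre : (u / D).re = (u * conj D).re / ‖D‖ ^ 2 := by
    rw [div_re, ← normSq_eq_norm_sq]; simp only [mul_re, conj_re, conj_im]; ring
  have hnorm : -(‖u / D‖ * c) = -(c * ‖u‖ * ‖D‖) / ‖D‖ ^ 2 := by
    rw [norm_div]; field_simp
  rw [hre, hnorm]
  gcongr

lemma exists_pos_forall_lt_mul_rpow {σ ε : ℝ} (hσ : 0 < σ) (hε : 0 < ε) (M : ℝ) :
    ∃ x₀ > 0, ∀ x ≥ x₀, M < ε * x ^ σ := by
  obtain ⟨x₀, hx₀⟩ :=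
    eventually_atTop.1 ((tendsto_rpow_atTop hσ).eventually_gt_atTop (M / ε))
  refine ⟨max x₀ 1, by positivity, fun x hx => ?_⟩
  rw [← div_lt_iff₀' hε]
  exact hx₀ x (le_of_max_le_left hx)

lemma norm_mul_cpow_neg_le {v l : ℂ} {M ε σ : ℝ} (hv : ‖v‖ ≤ M) (hl : M < ε * ‖l‖ ^ σ) :
    ‖v * l ^ (-(σ : ℂ))‖ ≤ ε := by
  have hlσ : 0 < ‖l‖ ^ σ := by
    by_contra! h
    rw [le_antisymm h (Real.rpow_nonneg (norm_nonneg l) σ), mul_zero] at hl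
    linarith [norm_nonneg v]
  rw [norm_mul, ← ofReal_neg, norm_cpow_real, Real.rpow_neg (norm_nonneg l),
    ← div_eq_mul_inv, div_le_iff₀ hlσ]
  linarith

theorem choice_of_beta_general (α γ σ : ℝ) (hα : 0 < α) (hγ : γ ∈ Set.Ioo (0 : ℝ) 1)
    (hσ : 0 < σ) (N₁ : ℂ → ℂ)
    (hN₁bdd : ∃ M : ℝ, ∀ l : ℂ, 0 < l.re → ‖(N₁ l)‖ ≤ M)
    (δ : ℝ) (hδ : δ ∈ Set.Ioo 0 ((1 - γ) * Real.pi / 2)) :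
    ∃ β₀ : ℝ, 0 < β₀ ∧ ∀ β : ℝ, β₀ ≤ β → ∀ ω : ℝ,
      ‖(N₁ ((β : ℂ) + ω * Complex.I))‖
          < α * ‖((β : ℂ) + ω * Complex.I)‖ ^ σ ∧
      -(‖(((β : ℂ) + ω * Complex.I) ^ ((1 : ℂ) + (γ : ℂ))
            / ((α : ℂ) + N₁ ((β : ℂ) + ω * Complex.I)
                * ((β : ℂ) + ω * Complex.I) ^ (-(σ : ℂ))))‖ * Real.cos δ)
        ≤ ((((β : ℂ) + ω * Complex.I) ^ ((1 : ℂ) + (γ : ℂ))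
            / ((α : ℂ) + N₁ ((β : ℂ) + ω * Complex.I)
                * ((β : ℂ) + ω * Complex.I) ^ (-(σ : ℂ)))).re) := by
  obtain ⟨M, hM⟩ := hN₁bdd
  obtain ⟨hγ₀, hγ₁⟩ := hγ
  obtain ⟨hδ₀, hδ₁⟩ := hδ
  set a := Real.cos ((1 + γ) * Real.pi / 2)
  have hc : 0 ≤ Real.cos δ := Real.cos_nonneg_of_neg_pi_div_two_le_of_le
    (by linarith [Real.pi_pos]) (by nlinarith [Real.pi_pos])
  have hca : 0 < Real.cos δ + a := by
    linarith [neg_cos_lt_cos_one_add_mul_pi_div_two hδ₀.le (by linarith) hδ₁]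
  obtain ⟨x₁, hx₁, h₁⟩ := exists_pos_forall_lt_mul_rpow hσ hα M
  obtain ⟨x₂, -, h₂⟩ := exists_pos_forall_lt_mul_rpow hσ
    (by positivity : 0 < α * (Real.cos δ + a) / (1 + Real.cos δ)) M
  refine ⟨max x₁ x₂, lt_max_of_lt_left hx₁, fun β hβ ω => ?_⟩
  set l : ℂ := β + ω * I
  have hl : 0 < l.re := by simpa [l] using hx₁.trans_le ((le_max_left _ _).trans hβ)
  have hβl : β ≤ ‖l‖ := by simpa [l] using re_le_norm l
  refine ⟨(hM l hl).trans_lt (h₁ _ ((le_max_left _ _).trans (hβ.trans hβl))), ?_⟩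
  have hw := norm_mul_cpow_neg_le (hM l hl) (h₂ _ ((le_max_right _ _).trans (hβ.trans hβl)))
  rw [le_div_iff₀ (by positivity)] at hw
  have hu := cos_mul_pi_div_two_mul_norm_le_re_cpow hl (p := 1 + γ) (by linarith) (by linarith)
  push_cast at hu
  exact neg_norm_mul_le_re_div (neg_mul_norm_le_re_mul_conj_add hα.le hc hu hw)

/-- Choice of the abscissa `β`: if `N₁` is holomorphic and bounded on the open
right half-plane and `δ ∈ (0, (1−γ)π/2)`, then there is `β₀ > 0` such that for
all `β ≥ β₀` and all `ω ∈ ℝ`: `|N₁(β+iω)| < α |β+iω|^σ`, and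
`ζ(β+iω) = (β+iω)^(1+γ)/(α + N₁(β+iω)(β+iω)^(−σ))` satisfies
`Re ζ(β+iω) ≥ −|ζ(β+iω)| cos δ` (i.e. `|Arg ζ(β+iω)| ≤ π − δ`). -/
theorem choice_of_beta (α γ σ : ℝ) (hα : 0 < α) (hγ : γ ∈ Set.Ioo (0 : ℝ) 1)
    (hσ : 0 < σ) (N₁ : ℂ → ℂ)
    (hN₁hol : DifferentiableOn ℂ N₁ {l : ℂ | 0 < l.re})
    (hN₁bdd : ∃ M : ℝ, ∀ l : ℂ, 0 < l.re → ‖(N₁ l)‖ ≤ M)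
    (δ : ℝ) (hδ : δ ∈ Set.Ioo 0 ((1 - γ) * Real.pi / 2)) :
    ∃ β₀ : ℝ, 0 < β₀ ∧ ∀ β : ℝ, β₀ ≤ β → ∀ ω : ℝ,
      ‖(N₁ ((β : ℂ) + ω * Complex.I))‖
          < α * ‖((β : ℂ) + ω * Complex.I)‖ ^ σ ∧
      -(‖(((β : ℂ) + ω * Complex.I) ^ ((1 : ℂ) + (γ : ℂ))
            / ((α : ℂ) + N₁ ((β : ℂ) + ω * Complex.I)
                * ((β : ℂ) + ω * Complex.I) ^ (-(σ : ℂ))))‖ * Real.cos δ)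
        ≤ ((((β : ℂ) + ω * Complex.I) ^ ((1 : ℂ) + (γ : ℂ))
            / ((α : ℂ) + N₁ ((β : ℂ) + ω * Complex.I)
                * ((β : ℂ) + ω * Complex.I) ^ (-(σ : ℂ)))).re) :=
  choice_of_beta_general α γ σ hα hγ hσ N₁ hN₁bdd δ hδ
end

section
/- Let N : (0,∞) → ℝ be locally integrable, n a positive integer, ξ ∈ ℝ, and let g : [0,∞) → ℝ be continuous with f(t) = ∫₀^t g(s) ds. Let z : [0,∞) → ℝ be locally absolutely continuous with z(0) = 1 and z'(t) = −n² ∫₀^t N(t−s) z(s) ds for almost every t. Define θ(t) = ξ·z(t) + n ∫₀^t z(t−s) (∫₀^s N(s−r) f(r) dr) ds. Then θ(0) = ξ and θ is locally absolutely continuous with θ'(t) = −n² ∫₀^t N(t−s) θ(s) ds + n ∫₀^t N(t−s) f(s) ds for almost every t (variation of constants formula). -/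
/-!
Write `u ∗ v` for `causalConv u v`, i.e. `(u ∗ v)(t) = ∫₀ᵗ u(t - s) v(s) ds`, and `w = N ∗ f`,
so that `θ = ξ z + n (z ∗ w)`. Since `z = 1 + ∫₀ z'`, Leibniz's rule gives
`(z ∗ w)' = w + z' ∗ w`, hence `θ` is absolutely continuous with `θ' = ξ z' + n (w + z' ∗ w)`.
Substituting `z' = -n² N ∗ z` and using associativity `(N ∗ z) ∗ w = N ∗ (z ∗ w)` (Fubini on
the triangle `0 < r ≤ s ≤ t`) turns this into `θ' = -n² N ∗ θ + n N ∗ f`.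
-/

open MeasureTheory Set Function

namespace CausalConv

noncomputable def causalConv (u v : ℝ → ℝ) (t : ℝ) : ℝ := ∫ s in (0 : ℝ)..t, u (t - s) * v s

variable {u v w : ℝ → ℝ} {t : ℝ}

theorem causalConv_eq_integral_mul_sub (u v : ℝ → ℝ) (t : ℝ) :
    causalConv u v t = ∫ x in (0 : ℝ)..t, u x * v (t - x) := by
  unfold causalConv
  simpa only [sub_sub_cancel, sub_self, sub_zero] using
    intervalIntegral.integral_comp_sub_left (fun x => u x * v (t - x)) t (a := 0) (b := t)

theorem causalConv_comm (u v : ℝ → ℝ) (t : ℝ) : causalConv u v t = causalConv v u t := by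
  rw [causalConv_eq_integral_mul_sub, causalConv]
  simp only [mul_comm]

theorem causalConv_congr_ae_left (ht : 0 ≤ t) (h : u =ᵐ[volume.restrict (Ioc 0 t)] w) :
    causalConv u v t = causalConv w v t := by
  simp only [causalConv_eq_integral_mul_sub]
  refine intervalIntegral.integral_congr_ae ?_
  rw [uIoc_of_le ht]
  filter_upwards [(ae_restrict_iff' measurableSet_Ioc).mp h] with x hx hmem
  rw [hx hmem]

theorem causalConv_smul_right (c : ℝ) (u v : ℝ → ℝ) (t : ℝ) :
    causalConv u (c • v) t = c * causalConv u v t := by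
  simp only [causalConv, Pi.smul_apply, smul_eq_mul, mul_left_comm _ c,
    intervalIntegral.integral_const_mul]

theorem causalConv_smul_left (c : ℝ) (u v : ℝ → ℝ) (t : ℝ) :
    causalConv (c • u) v t = c * causalConv u v t := by
  rw [causalConv_comm, causalConv_smul_right, causalConv_comm]

theorem causalConv_one_left (v : ℝ → ℝ) (t : ℝ) :
    causalConv (fun _ => 1) v t = ∫ s in (0 : ℝ)..t, v s := by
  simp only [causalConv, one_mul]

theorem intervalIntegrable_causalConv_integrand (ht : 0 ≤ t) (hu : IntegrableOn u (Ioc 0 t))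
    (hv : ContinuousOn v (Icc 0 t)) :
    IntervalIntegrable (fun s => u (t - s) * v s) volume 0 t := by
  have hu' := ((intervalIntegrable_iff_integrableOn_Ioc_of_le ht).2 hu).comp_sub_left t
  rw [sub_self, sub_zero] at hu'
  exact hu'.symm.mul_continuousOn (by rwa [uIcc_of_le ht])

theorem causalConv_add_right (ht : 0 ≤ t) (hu : IntegrableOn u (Ioc 0 t))
    (hv : ContinuousOn v (Icc 0 t)) (hw : ContinuousOn w (Icc 0 t)) :
    causalConv u (v + w) t = causalConv u v t + causalConv u w t := by
  simp only [causalConv, Pi.add_apply, mul_add]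
  exact intervalIntegral.integral_add (intervalIntegrable_causalConv_integrand ht hu hv)
    (intervalIntegrable_causalConv_integrand ht hu hw)

theorem continuousOn_primitive_zero (ht : 0 ≤ t) (hu : IntegrableOn u (Ioc 0 t)) :
    ContinuousOn (fun s => ∫ r in (0 : ℝ)..s, u r) (Icc 0 t) := by
  rw [← uIcc_of_le ht]
  exact intervalIntegral.continuousOn_primitive_interval'
    ((intervalIntegrable_iff_integrableOn_Ioc_of_le ht).2 hu) left_mem_uIcc

theorem continuousOn_causalConv (ht : 0 ≤ t) (hu : IntegrableOn u (Ioc 0 t))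
    (hv : ContinuousOn v (Icc 0 t)) : ContinuousOn (causalConv u v) (Icc 0 t) := by
  -- `ψ` is continuous on `ℝ`, vanishes on `(-∞, 0]` and equals `v - v 0` on `[0, t]`, which
  -- removes the moving cut-off `x ≤ s` and leaves a dominated-convergence argument.
  set ψ : ℝ → ℝ := fun y => v (projIcc 0 t ht y) - v 0 with hψ
  have hψc : Continuous ψ :=
    (hv.comp_continuous (continuous_subtype_val.comp continuous_projIcc)
      fun y => (projIcc 0 t ht y).2).sub continuous_const
  obtain ⟨M, hM⟩ := isCompact_Icc.exists_bound_of_continuousOn hv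
  have hψM : ∀ y, ‖ψ y‖ ≤ 2 * M := fun y => by
    have := hM _ (projIcc 0 t ht y).2
    have := hM 0 (left_mem_Icc.2 ht)
    calc ‖ψ y‖ ≤ ‖v (projIcc 0 t ht y)‖ + ‖v 0‖ := norm_sub_le _ _
      _ ≤ 2 * M := by linarith
  have hdecomp : ∀ s ∈ Icc 0 t, causalConv u v s =
      (∫ x in Ioc 0 t, u x * ψ (s - x)) + v 0 * ∫ x in (0 : ℝ)..s, u x := by
    intro s hs
    have hus : IntervalIntegrable u volume 0 s :=
      (intervalIntegrable_iff_integrableOn_Ioc_of_le hs.1).2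
        (hu.mono_set (Ioc_subset_Ioc_right hs.2))
    have hsplit : causalConv u v s = ∫ x in (0 : ℝ)..s, (u x * ψ (s - x) + v 0 * u x) := by
      rw [causalConv_eq_integral_mul_sub]
      refine intervalIntegral.integral_congr fun x hx => ?_
      rw [uIcc_of_le hs.1] at hx
      have hsx : s - x ∈ Icc 0 t := ⟨by linarith [hx.2], by linarith [hx.1, hs.2]⟩
      simp only [hψ, projIcc_of_mem ht hsx]
      ring
    have hvanish : ∀ x ∈ Ioc 0 t \ Ioc 0 s, u x * ψ (s - x) = 0 := fun x hx => by
      have hsx : s - x ≤ 0 := by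
        have := hx.2
        simp only [mem_Ioc, not_and, not_le] at this
        linarith [this hx.1.1]
      simp [hψ, projIcc_of_le_left ht hsx]
    rw [hsplit, intervalIntegral.integral_add
        (hus.mul_continuousOn (g := fun x => ψ (s - x)) (by fun_prop)) (hus.const_mul _),
      intervalIntegral.integral_const_mul, intervalIntegral.integral_of_le hs.1,
      setIntegral_eq_of_subset_of_forall_sdiff_eq_zero measurableSet_Ioc
        (Ioc_subset_Ioc_right hs.2) hvanish]
  have hdom : Continuous fun s => ∫ x in Ioc 0 t, u x * ψ (s - x) :=
    continuous_of_dominated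
      (fun s => hu.aestronglyMeasurable.mul (hψc.comp (continuous_sub_left s)).aestronglyMeasurable)
      (fun s => ae_of_all _ fun x => by
        rw [norm_mul]
        exact mul_le_mul_of_nonneg_left (hψM _) (norm_nonneg _))
      (hu.norm.mul_const _)
      (ae_of_all _ fun x => continuous_const.mul (hψc.comp (continuous_sub_right x)))
  exact (hdom.continuousOn.add
    (continuousOn_const.mul (continuousOn_primitive_zero ht hu))).congr hdecomp

def triangle (t : ℝ) : Set (ℝ × ℝ) := {p | 0 < p.2 ∧ p.2 ≤ p.1 ∧ p.1 ≤ t}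

theorem measurableSet_triangle (t : ℝ) : MeasurableSet (triangle t) :=
  (measurableSet_lt measurable_const measurable_snd).inter
    ((measurableSet_le measurable_snd measurable_fst).inter
      (measurableSet_le measurable_fst measurable_const))

theorem integral_integral_swap_triangle {F : ℝ → ℝ → ℝ} (ht : 0 ≤ t)
    (hF : IntegrableOn (uncurry F) (triangle t)) :
    ∫ s in (0 : ℝ)..t, ∫ r in (0 : ℝ)..s, F s r = ∫ r in (0 : ℝ)..t, ∫ s in r..t, F s r := by
  set G : ℝ → ℝ → ℝ := fun s r => (triangle t).indicator (uncurry F) (s, r)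
  have hG : Integrable (uncurry G) (volume.prod volume) := by
    rw [← Measure.volume_eq_prod]
    exact (integrable_indicator_iff (measurableSet_triangle t)).2 hF
  have hrow : ∀ s, ∫ r, G s r = (Ioc 0 t).indicator (fun s => ∫ r in (0 : ℝ)..s, F s r) s := by
    intro s
    by_cases hs : s ∈ Ioc 0 t
    · rw [indicator_of_mem hs, intervalIntegral.integral_of_le hs.1.le,
        ← integral_indicator measurableSet_Ioc]
      congr 1 with r
      simp only [G, triangle, indicator_apply, mem_ofPred_eq, mem_Ioc, uncurry_apply_pair]
      exact if_congr ⟨fun h => ⟨h.1, h.2.1⟩, fun h => ⟨h.1, h.2, hs.2⟩⟩ rfl rfl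
    · rw [indicator_of_notMem hs]
      refine integral_eq_zero_of_ae (ae_of_all _ fun r => indicator_of_notMem ?_ _)
      exact fun h => hs ⟨h.1.trans_le h.2.1, h.2.2⟩
  have hcol : ∀ r, ∫ s, G s r = (Ioc 0 t).indicator (fun r => ∫ s in r..t, F s r) r := by
    intro r
    by_cases hr : r ∈ Ioc 0 t
    · rw [indicator_of_mem hr, intervalIntegral.integral_of_le hr.2,
        setIntegral_congr_set Ioc_ae_eq_Icc, ← integral_indicator measurableSet_Icc]
      congr 1 with s
      simp only [G, triangle, indicator_apply, mem_ofPred_eq, mem_Icc, uncurry_apply_pair]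
      exact if_congr ⟨fun h => h.2, fun h => ⟨hr.1, h⟩⟩ rfl rfl
    · rw [indicator_of_notMem hr]
      refine integral_eq_zero_of_ae (ae_of_all _ fun s => indicator_of_notMem ?_ _)
      exact fun h => hr ⟨h.1, h.2.1.trans h.2.2⟩
  calc ∫ s in (0 : ℝ)..t, ∫ r in (0 : ℝ)..s, F s r
      = ∫ s, ∫ r, G s r := by
        rw [intervalIntegral.integral_of_le ht, ← integral_indicator measurableSet_Ioc]
        simp only [hrow]
    _ = ∫ r, ∫ s, G s r := integral_integral_swap hG
    _ = ∫ r in (0 : ℝ)..t, ∫ s in r..t, F s r := by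
        rw [intervalIntegral.integral_of_le ht, ← integral_indicator measurableSet_Ioc]
        simp only [hcol]

theorem integrableOn_triangle_mul_mul (hu : IntegrableOn u (Ioc 0 t))
    (hv : IntegrableOn v (Ioc 0 t)) (hw : ContinuousOn w (Icc 0 t)) :
    IntegrableOn (uncurry fun c a => u a * v (c - a) * w (t - c)) (triangle t) := by
  -- on the triangle, `u a * v (c - a)` is the convolution integrand of zero extensions
  have hconv : Integrable fun p : ℝ × ℝ =>
      (Ioc 0 t).indicator u p.2 * (Icc 0 t).indicator v (p.1 - p.2) := by
    rw [Measure.volume_eq_prod]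
    simpa using ((integrable_indicator_iff measurableSet_Ioc).2 hu).convolution_integrand
      (ContinuousLinearMap.mul ℝ ℝ) ((integrable_indicator_iff measurableSet_Icc).2
        ((integrableOn_Icc_iff_integrableOn_Ioc).2 hv))
  have huv : IntegrableOn (fun p : ℝ × ℝ => u p.2 * v (p.1 - p.2)) (triangle t) := by
    refine hconv.integrableOn.congr_fun (fun p hp => ?_) (measurableSet_triangle t)
    have ha : p.2 ∈ Ioc 0 t := ⟨hp.1, hp.2.1.trans hp.2.2⟩
    have hb : p.1 - p.2 ∈ Icc 0 t := ⟨sub_nonneg.2 hp.2.1, by linarith [hp.1, hp.2.2]⟩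
    simp only [indicator_of_mem ha, indicator_of_mem hb]
  obtain ⟨M, hM⟩ := isCompact_Icc.exists_bound_of_continuousOn hw
  have hmaps : MapsTo (fun p : ℝ × ℝ => t - p.1) (triangle t) (Icc 0 t) := fun p hp =>
    ⟨sub_nonneg.2 hp.2.2, by linarith [hp.1, hp.2.1]⟩
  exact huv.mul_bdd
    ((hw.comp (by fun_prop) hmaps).aestronglyMeasurable (measurableSet_triangle t))
    (ae_restrict_of_forall_mem (measurableSet_triangle t) fun p hp => hM _ (hmaps hp))

theorem causalConv_assoc (ht : 0 ≤ t) (hu : IntegrableOn u (Ioc 0 t))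
    (hv : IntegrableOn v (Ioc 0 t)) (hw : ContinuousOn w (Icc 0 t)) :
    causalConv u (causalConv v w) t = causalConv (causalConv u v) w t := by
  calc causalConv u (causalConv v w) t
      = ∫ a in (0 : ℝ)..t, u a * causalConv v w (t - a) := causalConv_eq_integral_mul_sub _ _ _
    _ = ∫ a in (0 : ℝ)..t, ∫ c in a..t, u a * v (c - a) * w (t - c) := by
        refine intervalIntegral.integral_congr fun a _ => ?_
        rw [causalConv_eq_integral_mul_sub, ← intervalIntegral.integral_const_mul]
        simpa only [sub_self, sub_sub_sub_cancel_right, mul_assoc] using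
          (intervalIntegral.integral_comp_sub_right (fun b => u a * (v b * w (t - a - b))) a
            (a := a) (b := t)).symm
    _ = ∫ c in (0 : ℝ)..t, ∫ a in (0 : ℝ)..c, u a * v (c - a) * w (t - c) :=
        (integral_integral_swap_triangle ht (integrableOn_triangle_mul_mul hu hv hw)).symm
    _ = ∫ c in (0 : ℝ)..t, causalConv u v c * w (t - c) := by
        simp only [intervalIntegral.integral_mul_const, causalConv_eq_integral_mul_sub]
    _ = causalConv (causalConv u v) w t := (causalConv_eq_integral_mul_sub _ _ _).symm

/-- Leibniz's rule `(z ∗ w)' = z(0) w + z' ∗ w`, integrated from `0` to `t`. -/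
theorem causalConv_eq_integral_of_eq_add_integral {z z' : ℝ → ℝ} {c : ℝ} (ht : 0 ≤ t)
    (hz' : IntegrableOn z' (Ioc 0 t)) (hw : ContinuousOn w (Icc 0 t))
    (hz : ∀ s ∈ Icc 0 t, z s = c + ∫ r in (0 : ℝ)..s, z' r) :
    causalConv z w t = ∫ s in (0 : ℝ)..t, (c * w s + causalConv z' w s) := by
  set P : ℝ → ℝ := fun s => ∫ r in (0 : ℝ)..s, z' r
  have hwi : IntervalIntegrable w volume 0 t := hw.intervalIntegrable_of_Icc ht
  calc causalConv z w t
      = ∫ s in (0 : ℝ)..t, (c * w s + P (t - s) * w s) := by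
        refine intervalIntegral.integral_congr fun s hs => ?_
        rw [uIcc_of_le ht] at hs
        rw [hz (t - s) ⟨by linarith [hs.2], by linarith [hs.1]⟩]
        ring
    _ = c * (∫ s in (0 : ℝ)..t, w s) + causalConv P w t := by
        rw [intervalIntegral.integral_add (hwi.const_mul _)
          (intervalIntegrable_causalConv_integrand ht ((continuousOn_primitive_zero ht
            hz').integrableOn_Icc.mono_set Ioc_subset_Icc_self) hw),
          intervalIntegral.integral_const_mul]
        rfl
    _ = c * (∫ s in (0 : ℝ)..t, w s) + ∫ s in (0 : ℝ)..t, causalConv z' w s := by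
        rw [← causalConv_one_left (causalConv z' w),
          causalConv_assoc ht (integrableOn_const measure_Ioc_lt_top.ne) hz' hw,
          funext (causalConv_one_left z')]
    _ = ∫ s in (0 : ℝ)..t, (c * w s + causalConv z' w s) := by
        rw [intervalIntegral.integral_add (hwi.const_mul _)
          ((continuousOn_causalConv ht hz' hw).intervalIntegrable_of_Icc ht),
          intervalIntegral.integral_const_mul]

theorem integrableOn_Ioc_of_forall_pos (h : ∀ T, 0 < T → IntegrableOn u (Ioc 0 T)) (t : ℝ) :
    IntegrableOn u (Ioc 0 t) :=
  (h (max t 0 + 1) (by positivity)).mono_set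
    (Ioc_subset_Ioc_right (by linarith [le_max_left t 0]))

end CausalConv

open CausalConv

theorem variation_of_constants_general (N z z' : ℝ → ℝ) (n : ℕ) (ξ : ℝ)
    (g : ℝ → ℝ) (hg : Continuous g) (f : ℝ → ℝ)
    (hf : ∀ t : ℝ, f t = ∫ s in (0 : ℝ)..t, g s)
    (hNloc : ∀ T : ℝ, 0 < T → IntegrableOn N (Ioc 0 T))
    (hz'loc : ∀ T : ℝ, 0 < T → IntegrableOn z' (Ioc 0 T))
    (hz0 : z 0 = 1)
    (hrep : ∀ t : ℝ, 0 ≤ t → z t = 1 + ∫ s in (0 : ℝ)..t, z' s)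
    (heqz : ∀ᵐ t ∂(volume.restrict (Ioi (0 : ℝ))),
      z' t = -(n : ℝ) ^ 2 * ∫ s in (0 : ℝ)..t, N (t - s) * z s)
    (θ : ℝ → ℝ)
    (hθ : ∀ t : ℝ, θ t = ξ * z t
      + n * ∫ s in (0 : ℝ)..t, z (t - s) * ∫ r in (0 : ℝ)..s, N (s - r) * f r) :
    θ 0 = ξ ∧
    ∃ θ' : ℝ → ℝ,
      (∀ T : ℝ, 0 < T → IntegrableOn θ' (Ioc 0 T)) ∧
      (∀ t : ℝ, 0 ≤ t → θ t = ξ + ∫ s in (0 : ℝ)..t, θ' s) ∧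
      (∀ᵐ t ∂(volume.restrict (Ioi (0 : ℝ))),
        θ' t = -(n : ℝ) ^ 2 * (∫ s in (0 : ℝ)..t, N (t - s) * θ s)
          + n * ∫ s in (0 : ℝ)..t, N (t - s) * f s) := by
  have hfc : Continuous f := by
    rw [funext hf]
    exact intervalIntegral.continuous_primitive (fun a b => hg.intervalIntegrable a b) 0
  have hN := integrableOn_Ioc_of_forall_pos hNloc
  have hz' := integrableOn_Ioc_of_forall_pos hz'loc
  have hzc : ∀ t, 0 ≤ t → ContinuousOn z (Icc 0 t) := fun t ht =>
    (continuousOn_const.add (continuousOn_primitive_zero ht (hz' t))).congr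
      fun s hs => hrep s hs.1
  set w := causalConv N f
  have hwc : ∀ t, 0 ≤ t → ContinuousOn w (Icc 0 t) := fun t ht =>
    continuousOn_causalConv ht (hN t) hfc.continuousOn
  have hwz' : ∀ t, 0 ≤ t → ContinuousOn (fun s => w s + causalConv z' w s) (Icc 0 t) :=
    fun t ht => (hwc t ht).add (continuousOn_causalConv ht (hz' t) (hwc t ht))
  obtain rfl : θ = ξ • z + (n : ℝ) • causalConv z w := funext hθ
  refine ⟨by simp [causalConv, hz0], fun s => ξ * z' s + n * (w s + causalConv z' w s),
    fun T hT => ?_, fun t ht => ?_, ?_⟩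
  · exact ((hz'loc T hT).const_mul ξ).add
      (((hwz' T hT.le).integrableOn_Icc.mono_set Ioc_subset_Icc_self).const_mul _)
  · have hzw := causalConv_eq_integral_of_eq_add_integral ht (hz' t) (hwc t ht)
      fun s hs => hrep s hs.1
    simp only [one_mul] at hzw
    simp only [Pi.add_apply, Pi.smul_apply, smul_eq_mul]
    rw [hrep t ht, hzw, intervalIntegral.integral_add
      (((intervalIntegrable_iff_integrableOn_Ioc_of_le ht).2 (hz' t)).const_mul ξ)
      (((hwz' t ht).intervalIntegrable_of_Icc ht).const_mul _),
      intervalIntegral.integral_const_mul, intervalIntegral.integral_const_mul]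
    ring
  · filter_upwards [heqz, ae_restrict_mem measurableSet_Ioi]
      with t (hz't : z' t = -(n : ℝ) ^ 2 * causalConv N z t) (ht : 0 < t)
    have hzi : IntegrableOn z (Ioc 0 t) :=
      (hzc t ht.le).integrableOn_Icc.mono_set Ioc_subset_Icc_self
    have hz'w : causalConv z' w t = -(n : ℝ) ^ 2 * causalConv N (causalConv z w) t := by
      rw [causalConv_congr_ae_left ht.le
          (ae_restrict_of_ae_restrict_of_subset Ioc_subset_Ioi_self heqz :
            z' =ᵐ[volume.restrict (Ioc 0 t)] (-(n : ℝ) ^ 2) • causalConv N z),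
        causalConv_smul_left, causalConv_assoc ht.le (hN t) hzi (hwc t ht.le)]
    change _ = -(n : ℝ) ^ 2 * causalConv N (ξ • z + (n : ℝ) • causalConv z w) t + n * w t
    rw [causalConv_add_right ht.le (hN t) ((hzc t ht.le).const_smul ξ)
        ((continuousOn_causalConv ht.le hzi (hwc t ht.le)).const_smul _),
      causalConv_smul_right, causalConv_smul_right, hz't, hz'w]
    ring

/-- Variation of constants formula: if `z' = −n² N∗z`, `z(0) = 1`, and
`θ(t) = ξ z(t) + n ∫₀^t z(t−s)(∫₀^s N(s−r) f(r) dr) ds` where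
`f(t) = ∫₀^t g(s) ds` with `g` continuous, then `θ(0) = ξ`, `θ` is locally
absolutely continuous and
`θ'(t) = −n² ∫₀^t N(t−s) θ(s) ds + n ∫₀^t N(t−s) f(s) ds` a.e. -/
theorem variation_of_constants (N z z' : ℝ → ℝ) (n : ℕ) (hn : 0 < n) (ξ : ℝ)
    (g : ℝ → ℝ) (hg : Continuous g) (f : ℝ → ℝ)
    (hf : ∀ t : ℝ, f t = ∫ s in (0 : ℝ)..t, g s)
    (hNloc : ∀ T : ℝ, 0 < T → IntegrableOn N (Ioc 0 T))
    (hz'loc : ∀ T : ℝ, 0 < T → IntegrableOn z' (Ioc 0 T))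
    (hz0 : z 0 = 1)
    (hrep : ∀ t : ℝ, 0 ≤ t → z t = 1 + ∫ s in (0 : ℝ)..t, z' s)
    (heqz : ∀ᵐ t ∂(volume.restrict (Ioi (0 : ℝ))),
      z' t = -(n : ℝ) ^ 2 * ∫ s in (0 : ℝ)..t, N (t - s) * z s)
    (θ : ℝ → ℝ)
    (hθ : ∀ t : ℝ, θ t = ξ * z t
      + n * ∫ s in (0 : ℝ)..t, z (t - s) * ∫ r in (0 : ℝ)..s, N (s - r) * f r) :
    θ 0 = ξ ∧
    ∃ θ' : ℝ → ℝ,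
      (∀ T : ℝ, 0 < T → IntegrableOn θ' (Ioc 0 T)) ∧
      (∀ t : ℝ, 0 ≤ t → θ t = ξ + ∫ s in (0 : ℝ)..t, θ' s) ∧
      (∀ᵐ t ∂(volume.restrict (Ioi (0 : ℝ))),
        θ' t = -(n : ℝ) ^ 2 * (∫ s in (0 : ℝ)..t, N (t - s) * θ s)
          + n * ∫ s in (0 : ℝ)..t, N (t - s) * f s) :=
  variation_of_constants_general N z z' n ξ g hg f hf hNloc hz'loc hz0 hrep heqz θ hθ
end
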